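/- arXiv:2502.01170 — 2 statements merged into one kernel-verified Lean document; each statement's English description precedes it below -/
import Mathlib

section
/- Let d, n, m be positive integers, let W be a real m×d matrix, X a real d×n matrix, O a real n×n matrix, and L̂, D̂ real m×n matrices, and let α > 0, γ > 0, η > 0 be real numbers. Define f(D) = α‖WX − D‖_F² + γ‖DO − L̂‖_F² + η‖D − D̂‖_F² for real m×n matrices D. Then the n×n matrix M = 2(α+η)I + 2γOOᵀ is positive definite (hence invertible), and D* = (2αWX + 2γL̂Oᵀ + 2ηD̂)·M⁻¹ is the unique global minimizer of f; that is, f(D*) ≤ f(D) for every real m×n matrix D, with equality only if D = D*. -/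
/-! With `M = 2(α+η)I + 2γOOᵀ` and `C = 2αWX + 2γL̂Oᵀ + 2ηD̂`, the gradient of `f` at `D` is
`DM - C`, and since `f` is quadratic its Taylor expansion is exact:
`f (D + E) = f D + tr (Eᵀ (DM - C)) + (α+η)‖E‖² + γ‖EO‖²`.
`M` is positive definite, so `D* = CM⁻¹` solves `D*M = C`, and then
`f D - f D* = (α+η)‖D - D*‖² + γ‖(D - D*)O‖²`, which vanishes only at `D = D*`. -/

open Matrix

/-- Squared Frobenius norm of a real matrix: `‖A‖_F² = trace (Aᵀ A)`. -/
noncomputable def frobSq {m n : ℕ} (A : Matrix (Fin m) (Fin n) ℝ) : ℝ :=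
  Matrix.trace (Aᵀ * A)

theorem Matrix.posDef_smul_one_add_smul_mul_transpose {ι κ : Type*} [Fintype ι] [DecidableEq ι]
    [Fintype κ] {a b : ℝ} (ha : 0 < a) (hb : 0 ≤ b) (O : Matrix ι κ ℝ) :
    (a • (1 : Matrix ι ι ℝ) + b • (O * Oᵀ)).PosDef := by
  have hOOt : (O * Oᵀ).PosSemidef := by
    simpa [conjTranspose_eq_transpose_of_trivial] using posSemidef_self_mul_conjTranspose O
  exact (PosDef.one.smul ha).add_posSemidef (hOOt.smul hb)

section Frobenius

variable {m n : ℕ}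

theorem trace_transpose_mul_comm (A B : Matrix (Fin m) (Fin n) ℝ) :
    trace (Bᵀ * A) = trace (Aᵀ * B) := by
  rw [← trace_transpose, transpose_mul, transpose_transpose]

theorem trace_transpose_mul_mul_right {k : ℕ} (A : Matrix (Fin m) (Fin k) ℝ)
    (E : Matrix (Fin m) (Fin n) ℝ) (O : Matrix (Fin n) (Fin k) ℝ) :
    trace (Aᵀ * (E * O)) = trace (Eᵀ * (A * Oᵀ)) := by
  rw [← Matrix.mul_assoc, trace_mul_comm, ← Matrix.mul_assoc, ← trace_transpose]
  simp only [transpose_mul, transpose_transpose, Matrix.mul_assoc]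

theorem frobSq_add (A B : Matrix (Fin m) (Fin n) ℝ) :
    frobSq (A + B) = frobSq A + 2 * trace (Aᵀ * B) + frobSq B := by
  simp only [frobSq, transpose_add, Matrix.add_mul, Matrix.mul_add, trace_add,
    trace_transpose_mul_comm B A]
  ring

theorem frobSq_sub (A B : Matrix (Fin m) (Fin n) ℝ) :
    frobSq (A - B) = frobSq A - 2 * trace (Aᵀ * B) + frobSq B := by
  simp only [frobSq, transpose_sub, Matrix.sub_mul, Matrix.mul_sub, trace_sub,
    trace_transpose_mul_comm B A]
  ring

theorem frobSq_nonneg (A : Matrix (Fin m) (Fin n) ℝ) : 0 ≤ frobSq A := by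
  simpa [frobSq, conjTranspose_eq_transpose_of_trivial] using
    (posSemidef_conjTranspose_mul_self A).trace_nonneg

theorem frobSq_eq_zero_iff {A : Matrix (Fin m) (Fin n) ℝ} : frobSq A = 0 ↔ A = 0 := by
  simpa [frobSq, conjTranspose_eq_transpose_of_trivial] using
    trace_conjTranspose_mul_self_eq_zero_iff (A := A)

end Frobenius

section Objective

variable {m n : ℕ} (A : Matrix (Fin m) (Fin n) ℝ) (O : Matrix (Fin n) (Fin n) ℝ)
  (Lhat Dhat : Matrix (Fin m) (Fin n) ℝ) (α γ η : ℝ)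

noncomputable def bldlObjective (D : Matrix (Fin m) (Fin n) ℝ) : ℝ :=
  α * frobSq (A - D) + γ * frobSq (D * O - Lhat) + η * frobSq (D - Dhat)

theorem bldlObjective_add (M : Matrix (Fin n) (Fin n) ℝ)
    (hM : M = (2 * (α + η)) • (1 : Matrix (Fin n) (Fin n) ℝ) + (2 * γ) • (O * Oᵀ))
    (D E : Matrix (Fin m) (Fin n) ℝ) :
    bldlObjective A O Lhat Dhat α γ η (D + E) = bldlObjective A O Lhat Dhat α γ η D
      + trace (Eᵀ * (D * M - ((2 * α) • A + (2 * γ) • (Lhat * Oᵀ) + (2 * η) • Dhat)))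
      + ((α + η) * frobSq E + γ * frobSq (E * O)) := by
  have hA : A - (D + E) = (A - D) - E := by abel
  have hO : (D + E) * O - Lhat = (D * O - Lhat) + E * O := by rw [Matrix.add_mul]; abel
  have hD : D + E - Dhat = (D - Dhat) + E := by abel
  rw [bldlObjective, bldlObjective, hA, hO, hD, frobSq_sub, frobSq_add, frobSq_add,
    trace_transpose_mul_mul_right, trace_transpose_mul_comm E (A - D),
    trace_transpose_mul_comm E (D - Dhat), hM]
  simp only [Matrix.sub_mul, Matrix.mul_sub, Matrix.mul_add, Matrix.mul_smul,
    Matrix.mul_one, trace_sub, trace_add, trace_smul, smul_eq_mul, Matrix.mul_assoc]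
  ring

theorem bldlObjective_eq_add_of_mul_eq (M : Matrix (Fin n) (Fin n) ℝ)
    (hM : M = (2 * (α + η)) • (1 : Matrix (Fin n) (Fin n) ℝ) + (2 * γ) • (O * Oᵀ))
    {Dstar : Matrix (Fin m) (Fin n) ℝ}
    (hDstar : Dstar * M = (2 * α) • A + (2 * γ) • (Lhat * Oᵀ) + (2 * η) • Dhat)
    (D : Matrix (Fin m) (Fin n) ℝ) :
    bldlObjective A O Lhat Dhat α γ η D = bldlObjective A O Lhat Dhat α γ η Dstar
      + ((α + η) * frobSq (D - Dstar) + γ * frobSq ((D - Dstar) * O)) := by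
  simpa only [add_sub_cancel, hDstar, sub_self, Matrix.mul_zero, trace_zero, add_zero] using
    bldlObjective_add A O Lhat Dhat α γ η M hM Dstar (D - Dstar)

end Objective

theorem stmt_2_general (d n m : ℕ)
    (W : Matrix (Fin m) (Fin d) ℝ) (X : Matrix (Fin d) (Fin n) ℝ)
    (O : Matrix (Fin n) (Fin n) ℝ)
    (Lhat Dhat : Matrix (Fin m) (Fin n) ℝ)
    (α γ η : ℝ) (hα : 0 < α) (hγ : 0 < γ) (hη : 0 < η)
    (f : Matrix (Fin m) (Fin n) ℝ → ℝ)
    (hf : ∀ D : Matrix (Fin m) (Fin n) ℝ,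
      f D = α * frobSq (W * X - D) + γ * frobSq (D * O - Lhat) + η * frobSq (D - Dhat))
    (M : Matrix (Fin n) (Fin n) ℝ)
    (hM : M = (2 * (α + η)) • (1 : Matrix (Fin n) (Fin n) ℝ) + (2 * γ) • (O * Oᵀ))
    (Dstar : Matrix (Fin m) (Fin n) ℝ)
    (hDstar : Dstar = ((2 * α) • (W * X) + (2 * γ) • (Lhat * Oᵀ) + (2 * η) • Dhat) * M⁻¹) :
    M.PosDef ∧ IsUnit M ∧ (∀ D, f Dstar ≤ f D) ∧ (∀ D, f Dstar = f D → D = Dstar) := by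
  have hMpos : M.PosDef :=
    hM ▸ posDef_smul_one_add_smul_mul_transpose (by positivity) (by positivity) O
  have hnormal : Dstar * M = (2 * α) • (W * X) + (2 * γ) • (Lhat * Oᵀ) + (2 * η) • Dhat := by
    rw [hDstar, nonsing_inv_mul_cancel_right _ _ ((isUnit_iff_isUnit_det M).mp hMpos.isUnit)]
  have hexcess (D : Matrix (Fin m) (Fin n) ℝ) :
      f D = f Dstar + ((α + η) * frobSq (D - Dstar) + γ * frobSq ((D - Dstar) * O)) := by
    simpa only [bldlObjective, ← hf] using
      bldlObjective_eq_add_of_mul_eq (W * X) O Lhat Dhat α γ η M hM hnormal D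
  have hnonneg₁ (D : Matrix (Fin m) (Fin n) ℝ) : 0 ≤ (α + η) * frobSq (D - Dstar) :=
    mul_nonneg (by positivity) (frobSq_nonneg _)
  have hnonneg₂ (D : Matrix (Fin m) (Fin n) ℝ) : 0 ≤ γ * frobSq ((D - Dstar) * O) :=
    mul_nonneg hγ.le (frobSq_nonneg _)
  refine ⟨hMpos, hMpos.isUnit, fun D => ?_, fun D hD => ?_⟩
  · linarith [hexcess D, hnonneg₁ D, hnonneg₂ D]
  · have hzero : (α + η) * frobSq (D - Dstar) = 0 := by
      linarith [hexcess D, hnonneg₁ D, hnonneg₂ D]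
    have : frobSq (D - Dstar) = 0 := (mul_eq_zero.mp hzero).resolve_left (by positivity)
    exact sub_eq_zero.mp (frobSq_eq_zero_iff.mp this)

/-- Closed-form solution of the D-subproblem in the ADMM scheme for the BLDL model. -/
theorem stmt_2 (d n m : ℕ) (hd : 0 < d) (hn : 0 < n) (hm : 0 < m)
    (W : Matrix (Fin m) (Fin d) ℝ) (X : Matrix (Fin d) (Fin n) ℝ)
    (O : Matrix (Fin n) (Fin n) ℝ)
    (Lhat Dhat : Matrix (Fin m) (Fin n) ℝ)
    (α γ η : ℝ) (hα : 0 < α) (hγ : 0 < γ) (hη : 0 < η)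
    (f : Matrix (Fin m) (Fin n) ℝ → ℝ)
    (hf : ∀ D : Matrix (Fin m) (Fin n) ℝ,
      f D = α * frobSq (W * X - D) + γ * frobSq (D * O - Lhat) + η * frobSq (D - Dhat))
    (M : Matrix (Fin n) (Fin n) ℝ)
    (hM : M = (2 * (α + η)) • (1 : Matrix (Fin n) (Fin n) ℝ) + (2 * γ) • (O * Oᵀ))
    (Dstar : Matrix (Fin m) (Fin n) ℝ)
    (hDstar : Dstar = ((2 * α) • (W * X) + (2 * γ) • (Lhat * Oᵀ) + (2 * η) • Dhat) * M⁻¹) :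
    M.PosDef ∧ IsUnit M ∧ (∀ D, f Dstar ≤ f D) ∧ (∀ D, f Dstar = f D → D = Dstar) :=
  stmt_2_general d n m W X O Lhat Dhat α γ η hα hγ hη f hf M hM Dstar hDstar
end

section
/- Let m, n, N be positive integers, let U be a real m×N matrix with UᵀU = I_N, let V be a real n×N matrix with VᵀV = I_N, let s : {1,…,N} → ℝ satisfy s(i) ≥ 0 for all i, and let ρ > 0. Let S be the N×N diagonal matrix with diagonal entries s(i) and S' the N×N diagonal matrix with diagonal entries max(s(i) − 1/ρ, 0). Suppose P and Λ are real m×n matrices with P − (1/ρ)Λ = U S Vᵀ, set Z' = U S' Vᵀ, and set Λ' = Λ + ρ(Z' − P). Then ‖Λ'‖_F² ≤ N. -/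
open Matrix

/-- Boundedness of the updated Lagrange multiplier after the SVT update of the
splitting variable in the ADMM scheme for the BLDL model. -/
theorem stmt_7 (m n N : ℕ) (hm : 0 < m) (hn : 0 < n) (hN : 0 < N)
    (U : Matrix (Fin m) (Fin N) ℝ) (hU : Uᵀ * U = 1)
    (V : Matrix (Fin n) (Fin N) ℝ) (hV : Vᵀ * V = 1)
    (s : Fin N → ℝ) (hs : ∀ i, 0 ≤ s i) (ρ : ℝ) (hρ : 0 < ρ)
    (S S' : Matrix (Fin N) (Fin N) ℝ)
    (hS : S = Matrix.diagonal s)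
    (hS' : S' = Matrix.diagonal (fun i => max (s i - 1 / ρ) 0))
    (P Λ : Matrix (Fin m) (Fin n) ℝ)
    (hP : P - ρ⁻¹ • Λ = U * S * Vᵀ)
    (Z' : Matrix (Fin m) (Fin n) ℝ) (hZ' : Z' = U * S' * Vᵀ)
    (Λ' : Matrix (Fin m) (Fin n) ℝ) (hΛ' : Λ' = Λ + ρ • (Z' - P)) :
    frobSq Λ' ≤ (N : ℝ) := by
  set d : Fin N → ℝ := fun i => ρ * (max (s i - 1 / ρ) 0 - s i) with hd
  have hρ0 : ρ ≠ 0 := ne_of_gt hρ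
  have hkey : Λ' = U * Matrix.diagonal d * Vᵀ := by
    have hP' : P = U * S * Vᵀ + ρ⁻¹ • Λ := by
      rw [← hP]; abel
    rw [hΛ', hZ', hP', hS, hS']
    have hdd : Matrix.diagonal d =
        ρ • (Matrix.diagonal (fun i => max (s i - 1 / ρ) 0) - Matrix.diagonal s) := by
      ext i j
      rcases eq_or_ne i j with h | h <;>
        simp [Matrix.diagonal_apply, h, hd, mul_sub]
    rw [hdd, smul_sub, smul_add, smul_smul, mul_inv_cancel₀ hρ0, one_smul]
    simp only [Matrix.mul_smul, Matrix.smul_mul, Matrix.sub_mul, Matrix.mul_sub]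
    module
  have htr : frobSq Λ' = ∑ i, (d i)^2 := by
    rw [frobSq, hkey]
    have : (U * Matrix.diagonal d * Vᵀ)ᵀ = V * Matrix.diagonal d * Uᵀ := by
      simp [Matrix.transpose_mul, Matrix.diagonal_transpose, Matrix.mul_assoc]
    rw [this]
    have : V * Matrix.diagonal d * Uᵀ * (U * Matrix.diagonal d * Vᵀ)
        = V * (Matrix.diagonal d * Matrix.diagonal d) * Vᵀ := by
      calc V * Matrix.diagonal d * Uᵀ * (U * Matrix.diagonal d * Vᵀ)
          = V * Matrix.diagonal d * (Uᵀ * U) * (Matrix.diagonal d * Vᵀ) := by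
            simp only [Matrix.mul_assoc]
        _ = V * (Matrix.diagonal d * Matrix.diagonal d) * Vᵀ := by
            rw [hU, Matrix.mul_one]; simp only [Matrix.mul_assoc]
    rw [this, Matrix.trace_mul_comm, ← Matrix.mul_assoc, hV, Matrix.one_mul,
      Matrix.diagonal_mul_diagonal, Matrix.trace_diagonal]
    exact Finset.sum_congr rfl fun i _ => (sq (d i)).symm
  rw [htr]
  calc ∑ i, (d i)^2 ≤ ∑ _i : Fin N, (1 : ℝ) := by
        apply Finset.sum_le_sum
        intro i _
        have h1 : -1 ≤ d i := by
          rcases le_or_gt (s i) (1/ρ) with h | h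
          · have hmax : max (s i - 1/ρ) 0 = 0 :=
              max_eq_right (by linarith)
            have : d i = -(ρ * s i) := by
              simp only [hd]; rw [hmax]; ring
            rw [this]
            have : ρ * s i ≤ ρ * (1/ρ) := by
              exact mul_le_mul_of_nonneg_left h (le_of_lt hρ)
            rw [mul_one_div, div_self hρ0] at this
            linarith
          · have hmax : max (s i - 1/ρ) 0 = s i - 1/ρ :=
              max_eq_left (by linarith)
            have : d i = -1 := by
              simp only [hd]; rw [hmax]; field_simp; ring
            rw [this]
        have h2 : d i ≤ 0 := by
          have : max (s i - 1/ρ) 0 - s i ≤ 0 := by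
            rcases le_or_gt (s i) (1/ρ) with h | h
            · rw [max_eq_right (by linarith : s i - 1/ρ ≤ 0)]
              linarith [hs i]
            · rw [max_eq_left (by linarith : (0:ℝ) ≤ s i - 1/ρ)]
              have : (0:ℝ) < 1/ρ := by positivity
              linarith
          exact mul_nonpos_of_nonneg_of_nonpos (le_of_lt hρ) this
        nlinarith
    _ = (N : ℝ) := by simp
end
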